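/- Let H be a finite-dimensional complex inner product space, ψ ∈ H a unit vector, and Π : H → H an orthogonal projection (a self-adjoint idempotent linear map). Define the reflections R_ψ = I − 2⟨ψ,·⟩ψ and R_Π = I − 2Π, and the walk operator W = −R_ψ R_Π. Let μ ≥ 1 be an integer, set P₀ = sin²(π/(2(2μ+1))), and assume ‖Πψ‖² ≤ P₀. Then sin²((2/π)·arcsin(‖Π(W^μ ψ)‖)·arcsin(√P₀)) = ‖Πψ‖². (In words: if the amplified probability ‖Π(W^μψ)‖² is measured exactly, the amplified amplitude estimation post-processing recovers the original expectation value ⟨ψ, Πψ⟩ = ‖Πψ‖² exactly.) -/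

import Mathlib

/-!
Write `u = Π ψ` and `v = ψ - Π ψ`: they are orthogonal, so `‖u‖ = sin θ` and `‖v‖ = cos θ` with
`θ = arcsin ‖Π ψ‖`. The walk `W` maps the plane spanned by `u` and `v` to itself and acts there as
the rotation by `2θ` (in the orthonormal frame `u / ‖u‖, v / ‖v‖`), so `W^μ ψ` sits at angle
`(2μ + 1) θ` and `‖Π (W^μ ψ)‖ = |sin ((2μ + 1) θ)|`. The hypothesis `‖Π ψ‖² ≤ P₀` says
`θ ≤ π / (2 (2μ + 1))`, so `(2μ + 1) θ ∈ [0, π/2]` and `arcsin` undoes this sine; the factor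
`(2/π) · arcsin √P₀ = 1 / (2μ + 1)` then returns `θ`.
-/

open Real
open scoped InnerProductSpace

namespace LinearMap.IsSymmetricProjection

variable {𝕜 E : Type*} [RCLike 𝕜] [NormedAddCommGroup E] [InnerProductSpace 𝕜 E]
  {P : E →ₗ[𝕜] E}

theorem map_map (hP : P.IsSymmetricProjection) (x : E) : P (P x) = P x :=
  LinearMap.congr_fun hP.isIdempotentElem x

theorem inner_map_sub_map (hP : P.IsSymmetricProjection) (x : E) : ⟪P x, x - P x⟫_𝕜 = 0 := by
  rw [inner_sub_right, hP.isSymmetric x (P x), hP.map_map, hP.isSymmetric, sub_self]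

theorem inner_map_self (hP : P.IsSymmetricProjection) (x : E) :
    ⟪x, P x⟫_𝕜 = ((‖P x‖ ^ 2 : ℝ) : 𝕜) := by
  rw [← hP.map_map x, ← hP.isSymmetric, hP.map_map, inner_self_eq_norm_sq_to_K]
  norm_cast

theorem inner_sub_map (hP : P.IsSymmetricProjection) (x : E) :
    ⟪x, x - P x⟫_𝕜 = ((‖x - P x‖ ^ 2 : ℝ) : 𝕜) := by
  nth_rw 1 [← add_sub_cancel (P x) x]
  rw [inner_add_left, hP.inner_map_sub_map, zero_add, inner_self_eq_norm_sq_to_K]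
  norm_cast

theorem norm_map_sq_add_norm_sub_map_sq (hP : P.IsSymmetricProjection) (x : E) :
    ‖P x‖ ^ 2 + ‖x - P x‖ ^ 2 = ‖x‖ ^ 2 := by
  have h := norm_add_sq (𝕜 := 𝕜) (P x) (x - P x)
  rw [add_sub_cancel, hP.inner_map_sub_map, map_zero, mul_zero, add_zero] at h
  exact h.symm

end LinearMap.IsSymmetricProjection

/-- `W` is the rotation by `2θ` in the frame `u / sin θ, v / cos θ`; tracking coordinates in the
frame `u, v` instead avoids dividing by `sin θ` or `cos θ`. -/
theorem pow_apply_add_of_rotation {𝕜 M : Type*} [RCLike 𝕜] [AddCommGroup M] [Module 𝕜 M]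
    {W : M →ₗ[𝕜] M} {u v : M} {θ : ℝ}
    (hu : W u = (cos (2 * θ) : 𝕜) • u - ((2 * sin θ ^ 2 : ℝ) : 𝕜) • v)
    (hv : W v = ((2 * cos θ ^ 2 : ℝ) : 𝕜) • u + (cos (2 * θ) : 𝕜) • v) (n : ℕ) :
    ∃ α β : ℝ, (W ^ n) (u + v) = (α : 𝕜) • u + (β : 𝕜) • v ∧
      α * sin θ = sin ((2 * n + 1) * θ) ∧ β * cos θ = cos ((2 * n + 1) * θ) := by
  induction n with
  | zero => exact ⟨1, 1, by simp⟩
  | succ n ih =>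
    obtain ⟨α, β, hWn, hα, hβ⟩ := ih
    have hangle : (2 * ((n + 1 : ℕ) : ℝ) + 1) * θ = (2 * n + 1) * θ + 2 * θ := by push_cast; ring
    refine ⟨α * cos (2 * θ) + β * (2 * cos θ ^ 2), -(α * (2 * sin θ ^ 2)) + β * cos (2 * θ),
      ?_, ?_, ?_⟩
    · rw [pow_succ', Module.End.mul_apply, hWn, map_add, map_smul, map_smul, hu, hv]
      push_cast
      module
    · rw [hangle, sin_add, ← hα, ← hβ, sin_two_mul]
      ring
    · rw [hangle, cos_add, ← hα, ← hβ, sin_two_mul]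
      ring

section GroverWalk

variable {𝕜 E : Type*} [RCLike 𝕜] [NormedAddCommGroup E] [InnerProductSpace 𝕜 E]
  {ψ : E} {P Rψ RP W : E →ₗ[𝕜] E}

theorem walk_apply_map (hP : P.IsSymmetricProjection)
    (hRψ : ∀ x : E, Rψ x = x - (2 : 𝕜) • (⟪ψ, x⟫_𝕜 • ψ))
    (hRP : RP = LinearMap.id - (2 : 𝕜) • P) (hW : W = -(Rψ ∘ₗ RP)) :
    W (P ψ) = ((1 - 2 * ‖P ψ‖ ^ 2 : ℝ) : 𝕜) • P ψ - ((2 * ‖P ψ‖ ^ 2 : ℝ) : 𝕜) • (ψ - P ψ) := by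
  have hRPu : RP (P ψ) = -P ψ := by
    rw [hRP]
    simp only [LinearMap.sub_apply, LinearMap.id_apply, LinearMap.smul_apply, hP.map_map]
    module
  rw [hW, LinearMap.neg_apply, LinearMap.comp_apply, hRPu, hRψ, inner_neg_right,
    hP.inner_map_self]
  push_cast
  module

theorem walk_apply_sub_map (hP : P.IsSymmetricProjection)
    (hRψ : ∀ x : E, Rψ x = x - (2 : 𝕜) • (⟪ψ, x⟫_𝕜 • ψ))
    (hRP : RP = LinearMap.id - (2 : 𝕜) • P) (hW : W = -(Rψ ∘ₗ RP)) :
    W (ψ - P ψ) = ((2 * ‖ψ - P ψ‖ ^ 2 : ℝ) : 𝕜) • P ψ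
      + ((2 * ‖ψ - P ψ‖ ^ 2 - 1 : ℝ) : 𝕜) • (ψ - P ψ) := by
  have hRPv : RP (ψ - P ψ) = ψ - P ψ := by
    rw [hRP]
    simp only [LinearMap.sub_apply, LinearMap.id_apply, LinearMap.smul_apply, map_sub,
      hP.map_map]
    module
  rw [hW, LinearMap.neg_apply, LinearMap.comp_apply, hRPv, hRψ, hP.inner_sub_map]
  push_cast
  module

theorem norm_map_walk_pow_apply (hP : P.IsSymmetricProjection)
    (hψ : ‖ψ‖ = 1) (hRψ : ∀ x : E, Rψ x = x - (2 : 𝕜) • (⟪ψ, x⟫_𝕜 • ψ))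
    (hRP : RP = LinearMap.id - (2 : 𝕜) • P) (hW : W = -(Rψ ∘ₗ RP)) (n : ℕ) :
    ‖P ((W ^ n) ψ)‖ = |sin ((2 * n + 1) * arcsin ‖P ψ‖)| := by
  have hpyth := hP.norm_map_sq_add_norm_sub_map_sq ψ
  rw [hψ, one_pow] at hpyth
  have hsin : sin (arcsin ‖P ψ‖) = ‖P ψ‖ :=
    sin_arcsin (by linarith [norm_nonneg (P ψ)]) (by nlinarith [norm_nonneg (ψ - P ψ)])
  have hcos : cos (arcsin ‖P ψ‖) = ‖ψ - P ψ‖ := by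
    rw [cos_arcsin, ← hpyth, add_sub_cancel_left, sqrt_sq (norm_nonneg _)]
  have hcos2 : cos (2 * arcsin ‖P ψ‖) = 1 - 2 * ‖P ψ‖ ^ 2 := by
    rw [cos_two_mul, cos_sq', hsin]
    ring
  have hu : W (P ψ) = (cos (2 * arcsin ‖P ψ‖) : 𝕜) • P ψ
      - ((2 * sin (arcsin ‖P ψ‖) ^ 2 : ℝ) : 𝕜) • (ψ - P ψ) := by
    rw [walk_apply_map hP hRψ hRP hW, hcos2, hsin]
  have hv : W (ψ - P ψ) = ((2 * cos (arcsin ‖P ψ‖) ^ 2 : ℝ) : 𝕜) • P ψ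
      + (cos (2 * arcsin ‖P ψ‖) : 𝕜) • (ψ - P ψ) := by
    rw [walk_apply_sub_map hP hRψ hRP hW, cos_two_mul, hcos]
  obtain ⟨α, β, hWn, hα, -⟩ := pow_apply_add_of_rotation hu hv n
  rw [add_sub_cancel] at hWn
  rw [hWn, map_add, map_smul, map_smul, hP.map_map, map_sub, hP.map_map, sub_self, smul_zero,
    add_zero, norm_smul, RCLike.norm_ofReal, ← hα, abs_mul, hsin, abs_norm]

end GroverWalk

theorem arcsin_abs_sin_mul_arcsin {k a : ℝ} (hk : 1 ≤ k) (ha : 0 ≤ a)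
    (h : a ≤ sin (π / (2 * k))) : arcsin |sin (k * arcsin a)| = k * arcsin a := by
  have hx₀ : 0 ≤ π / (2 * k) := div_nonneg pi_pos.le (by linarith)
  have hx₀' : π / (2 * k) ≤ π / 2 := div_le_div_of_nonneg_left pi_pos.le two_pos (by linarith)
  have hθ : arcsin a ≤ π / (2 * k) := by
    calc arcsin a ≤ arcsin (sin (π / (2 * k))) := arcsin_le_arcsin h
      _ = π / (2 * k) := arcsin_sin (by linarith [pi_pos]) hx₀'
  have hkθ : k * arcsin a ≤ π / 2 := by
    calc k * arcsin a ≤ k * (π / (2 * k)) := by gcongr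
      _ = π / 2 := by field_simp
  have hkθ0 : 0 ≤ k * arcsin a := mul_nonneg (by linarith) (arcsin_nonneg.mpr ha)
  rw [abs_of_nonneg (sin_nonneg_of_nonneg_of_le_pi hkθ0 (by linarith [pi_pos])),
    arcsin_sin (by linarith) hkθ]

theorem sin_sq_two_div_pi_mul_arcsin_abs_sin_mul_arcsin {k a : ℝ} (hk : 1 ≤ k) (ha : 0 ≤ a)
    (h : a ^ 2 ≤ sin (π / (2 * k)) ^ 2) :
    sin (2 / π * arcsin |sin (k * arcsin a)| * arcsin √(sin (π / (2 * k)) ^ 2)) ^ 2 = a ^ 2 := by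
  have hx₀ : 0 ≤ π / (2 * k) := div_nonneg pi_pos.le (by linarith)
  have hx₀' : π / (2 * k) ≤ π / 2 := div_le_div_of_nonneg_left pi_pos.le two_pos (by linarith)
  have hsin : 0 ≤ sin (π / (2 * k)) := sin_nonneg_of_nonneg_of_le_pi hx₀ (by linarith [pi_pos])
  have hle : a ≤ sin (π / (2 * k)) := (pow_le_pow_iff_left₀ ha hsin two_ne_zero).mp h
  have hk0 : k ≠ 0 := by positivity
  rw [arcsin_abs_sin_mul_arcsin hk ha hle, sqrt_sq hsin, arcsin_sin (by linarith) hx₀',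
    show 2 / π * (k * arcsin a) * (π / (2 * k)) = arcsin a by field_simp,
    sin_arcsin (by linarith) (hle.trans (sin_le_one _))]

theorem aae_exact_recovery_general
    {H : Type*} [NormedAddCommGroup H] [InnerProductSpace ℂ H]
    (ψ : H) (hψ : ‖ψ‖ = 1)
    (P : H →ₗ[ℂ] H) (hsa : P.IsSymmetric) (hidem : P ∘ₗ P = P)
    (Rψ RP W : H →ₗ[ℂ] H)
    (hRψ : ∀ x : H, Rψ x = x - (2 : ℂ) • ((inner ℂ ψ x : ℂ) • ψ))
    (hRP : RP = LinearMap.id - (2 : ℂ) • P)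
    (hW : W = -(Rψ ∘ₗ RP))
    (μ : ℕ) (P₀ : ℝ)
    (hP₀ : P₀ = Real.sin (Real.pi / (2 * (2 * (μ : ℝ) + 1))) ^ 2)
    (hsmall : ‖P ψ‖ ^ 2 ≤ P₀) :
    Real.sin ((2 / Real.pi) * Real.arcsin ‖P ((W ^ μ) ψ)‖ * Real.arcsin (Real.sqrt P₀)) ^ 2
      = ‖P ψ‖ ^ 2 := by
  subst hP₀
  rw [norm_map_walk_pow_apply ⟨hidem, hsa⟩ hψ hRψ hRP hW μ]
  exact sin_sq_two_div_pi_mul_arcsin_abs_sin_mul_arcsin (by linarith [μ.cast_nonneg (α := ℝ)])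
    (norm_nonneg _) hsmall

/-- If the amplified probability `‖Π (W^μ ψ)‖²` is measured exactly, the amplified
amplitude estimation post-processing recovers `⟨ψ, Πψ⟩ = ‖Πψ‖²` exactly. -/
theorem aae_exact_recovery
    {H : Type*} [NormedAddCommGroup H] [InnerProductSpace ℂ H] [FiniteDimensional ℂ H]
    (ψ : H) (hψ : ‖ψ‖ = 1)
    (P : H →ₗ[ℂ] H) (hsa : P.IsSymmetric) (hidem : P ∘ₗ P = P)
    (Rψ RP W : H →ₗ[ℂ] H)
    (hRψ : ∀ x : H, Rψ x = x - (2 : ℂ) • ((inner ℂ ψ x : ℂ) • ψ))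
    (hRP : RP = LinearMap.id - (2 : ℂ) • P)
    (hW : W = -(Rψ ∘ₗ RP))
    (μ : ℕ) (hμ : 1 ≤ μ) (P₀ : ℝ)
    (hP₀ : P₀ = Real.sin (Real.pi / (2 * (2 * (μ : ℝ) + 1))) ^ 2)
    (hsmall : ‖P ψ‖ ^ 2 ≤ P₀) :
    Real.sin ((2 / Real.pi) * Real.arcsin ‖P ((W ^ μ) ψ)‖ * Real.arcsin (Real.sqrt P₀)) ^ 2
      = ‖P ψ‖ ^ 2 :=
  aae_exact_recovery_general ψ hψ P hsa hidem Rψ RP W hRψ hRP hW μ P₀ hP₀ hsmall
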